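/- arXiv:2501.00970 — 5 statements merged into one kernel-verified Lean document; each statement's English description precedes it below -/
import Mathlib

section
/- Let θ₁ = (σ₁, α₁, ρ₁) and θ₂ = (σ₂, α₂, ρ₂) be parameter vectors with σ₁, σ₂ > 0, α₁, α₂ positive integers, and ρ₁, ρ₂ ∈ [0, 1). If F_W(w; σ₁, α₁, ρ₁) = F_W(w; σ₂, α₂, ρ₂) for every w ∈ (0, 1), then σ₁ = σ₂, α₁ = α₂ and ρ₁ = ρ₂ (identifiability of the unit-Fréchet family on the restricted parameter space). -/
/-- The unit-Fréchet CDF: `F_W(w; σ, α, ρ)` for `0 < w < 1`, where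
`s = w/(1-w)` and `t = s^α/σ^α`. -/
noncomputable def unitFrechetCDF (σ α ρ w : ℝ) : ℝ :=
  let s : ℝ := w / (1 - w)
  let t : ℝ := s ^ α / σ ^ α
  (t / (t + 1)) * (((t + 1) ^ 2 - ρ) / ((t + 1) ^ 2 - ρ * t))

/-!
Write `s = w/(1-w) ∈ (0, ∞)` and `F(t) = t/(t+1) · ((t+1)² - ρ)/((t+1)² - ρt)`, so that the CDF
is `F((s/σ)^α)`. As `t → 0`, `F(t) ~ (1 - ρ) t`, so as `s → 0` the CDF is asymptotic to
`(1 - ρ) σ^{-α} s^α`; the exponent and the coefficient of this leading term are determined by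
the distribution. The identity `F(t) + F(1/t) = 1` turns the behaviour as `s → ∞` into the same
kind of leading term at `0`, now with coefficient `(1 - ρ) σ^α`. Equal exponents give `α₁ = α₂`,
and the two coefficient equations multiply to `(1 - ρ₁)² = (1 - ρ₂)²`, whence `ρ₁ = ρ₂` and
then `σ₁ = σ₂`.
-/

open Filter Topology

lemma le_of_tendsto_div_pow {f : ℝ → ℝ} {a b : ℕ} {c d : ℝ}
    (ha : Tendsto (fun s => f s / s ^ a) (𝓝[>] 0) (𝓝 c))
    (hb : Tendsto (fun s => f s / s ^ b) (𝓝[>] 0) (𝓝 d)) (hc : c ≠ 0) : b ≤ a := by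
  by_contra! hab
  have hpow : Tendsto (fun s : ℝ => s ^ (b - a)) (𝓝[>] 0) (𝓝 0) :=
    ((continuous_pow _).tendsto' 0 0 (zero_pow (by omega))).mono_left nhdsWithin_le_nhds
  have hrewrite : (fun s => s ^ (b - a) * (f s / s ^ b)) =ᶠ[𝓝[>] 0] fun s => f s / s ^ a := by
    filter_upwards [self_mem_nhdsWithin] with s (hs : 0 < s)
    rw [← pow_sub_mul_pow s hab.le]
    field_simp
  exact hc (tendsto_nhds_unique ha (by simpa using (hpow.mul hb).congr' hrewrite))

lemma eq_and_eq_of_tendsto_div_pow {f : ℝ → ℝ} {a b : ℕ} {c d : ℝ}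
    (ha : Tendsto (fun s => f s / s ^ a) (𝓝[>] 0) (𝓝 c))
    (hb : Tendsto (fun s => f s / s ^ b) (𝓝[>] 0) (𝓝 d)) (hc : c ≠ 0) (hd : d ≠ 0) :
    a = b ∧ c = d := by
  obtain rfl : a = b :=
    le_antisymm (le_of_tendsto_div_pow hb ha hd) (le_of_tendsto_div_pow ha hb hc)
  exact ⟨rfl, tendsto_nhds_unique ha hb⟩

/-- The unit-Fréchet CDF as a function of `t = (s/σ)^α`. -/
noncomputable def unitFrechetCDFOfT (ρ t : ℝ) : ℝ :=
  t / (t + 1) * (((t + 1) ^ 2 - ρ) / ((t + 1) ^ 2 - ρ * t))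

lemma unitFrechetCDF_div_one_add (σ ρ : ℝ) (α : ℕ) {s : ℝ} (hs : 1 + s ≠ 0) :
    unitFrechetCDF σ α ρ (s / (1 + s)) = unitFrechetCDFOfT ρ ((σ⁻¹ * s) ^ α) := by
  have hw : s / (1 + s) / (1 - s / (1 + s)) = s := by
    field_simp
    ring
  simp only [unitFrechetCDF, unitFrechetCDFOfT, hw, Real.rpow_natCast, ← div_eq_inv_mul, div_pow]

lemma unitFrechetCDFOfT_add_inv (ρ : ℝ) {t : ℝ} (ht : 0 < t) (hρ : ρ < 4) :
    unitFrechetCDFOfT ρ t + unitFrechetCDFOfT ρ t⁻¹ = 1 := by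
  have hden : (t + 1) * ((t + 1) ^ 2 - ρ * t) ≠ 0 := by
    have : 0 < (t + 1) ^ 2 - ρ * t := by nlinarith [sq_nonneg (t - 1)]
    positivity
  have hinv : unitFrechetCDFOfT ρ t⁻¹ =
      ((t + 1) ^ 2 - ρ * t ^ 2) / ((t + 1) * ((t + 1) ^ 2 - ρ * t)) := by
    unfold unitFrechetCDFOfT
    field_simp
    ring
  rw [hinv, unitFrechetCDFOfT, div_mul_div_comm, ← add_div, div_eq_one_iff_eq hden]
  ring

lemma tendsto_unitFrechetCDFOfT_mul_pow_div_pow (ρ c : ℝ) {α : ℕ} (hα : 0 < α) :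
    Tendsto (fun s => unitFrechetCDFOfT ρ ((c * s) ^ α) / s ^ α) (𝓝[>] 0)
      (𝓝 (c ^ α * (1 - ρ))) := by
  set g : ℝ → ℝ := fun t => ((t + 1) ^ 2 - ρ) / ((t + 1) * ((t + 1) ^ 2 - ρ * t))
  have hg : Tendsto g (𝓝 0) (𝓝 (1 - ρ)) := by
    have : ContinuousAt g 0 := by
      apply ContinuousAt.div <;> first | fun_prop | norm_num
    simpa [g] using this.tendsto
  have hpow : Tendsto (fun s : ℝ => (c * s) ^ α) (𝓝 0) (𝓝 0) :=
    ((continuous_const.mul continuous_id).pow α).tendsto' 0 0 (by simp [hα.ne'])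
  have hrewrite : (fun s => c ^ α * g ((c * s) ^ α)) =ᶠ[𝓝[>] 0]
      fun s => unitFrechetCDFOfT ρ ((c * s) ^ α) / s ^ α := by
    filter_upwards [self_mem_nhdsWithin] with s (hs : 0 < s)
    simp only [g, unitFrechetCDFOfT, mul_pow]
    field_simp
  exact (((hg.comp hpow).const_mul _).mono_left nhdsWithin_le_nhds).congr' hrewrite

lemma eq_and_eq_of_unitFrechetCDFOfT_mul_pow_eq {ρ₁ ρ₂ c₁ c₂ : ℝ} {α₁ α₂ : ℕ}
    (hc₁ : c₁ ≠ 0) (hc₂ : c₂ ≠ 0) (hα₁ : 0 < α₁) (hα₂ : 0 < α₂) (hρ₁ : ρ₁ < 1) (hρ₂ : ρ₂ < 1)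
    (h : ∀ s > 0, unitFrechetCDFOfT ρ₁ ((c₁ * s) ^ α₁) = unitFrechetCDFOfT ρ₂ ((c₂ * s) ^ α₂)) :
    α₁ = α₂ ∧ c₁ ^ α₁ * (1 - ρ₁) = c₂ ^ α₂ * (1 - ρ₂) :=
  eq_and_eq_of_tendsto_div_pow (tendsto_unitFrechetCDFOfT_mul_pow_div_pow ρ₁ c₁ hα₁)
    ((tendsto_unitFrechetCDFOfT_mul_pow_div_pow ρ₂ c₂ hα₂).congr'
      (by filter_upwards [self_mem_nhdsWithin] with s hs; rw [h s hs]))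
    (mul_ne_zero (pow_ne_zero _ hc₁) (sub_ne_zero.2 hρ₁.ne'))
    (mul_ne_zero (pow_ne_zero _ hc₂) (sub_ne_zero.2 hρ₂.ne'))

lemma eq_and_eq_of_inv_pow_mul_eq_of_pow_mul_eq {σ₁ σ₂ r₁ r₂ : ℝ} {α : ℕ} (hσ₁ : 0 < σ₁)
    (hσ₂ : 0 < σ₂) (hr₁ : 0 < r₁) (hr₂ : 0 < r₂) (hα : α ≠ 0)
    (h₀ : σ₁⁻¹ ^ α * r₁ = σ₂⁻¹ ^ α * r₂) (h₁ : σ₁ ^ α * r₁ = σ₂ ^ α * r₂) :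
    σ₁ = σ₂ ∧ r₁ = r₂ := by
  have hsq : r₁ ^ 2 = r₂ ^ 2 := by
    calc r₁ ^ 2 = σ₁⁻¹ ^ α * r₁ * (σ₁ ^ α * r₁) := by rw [inv_pow]; field_simp
      _ = σ₂⁻¹ ^ α * r₂ * (σ₂ ^ α * r₂) := by rw [h₀, h₁]
      _ = r₂ ^ 2 := by rw [inv_pow]; field_simp
  obtain rfl : r₁ = r₂ := (pow_left_inj₀ hr₁.le hr₂.le two_ne_zero).1 hsq
  exact ⟨(pow_left_inj₀ hσ₁.le hσ₂.le hα).1 (mul_right_cancel₀ hr₁.ne' h₁), rfl⟩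

/-- Identifiability of the unit-Fréchet family on the restricted parameter space
`σ > 0`, `α` a positive integer, `ρ ∈ [0, 1)`. -/
theorem unitFrechet_identifiable
    (σ₁ σ₂ ρ₁ ρ₂ : ℝ) (α₁ α₂ : ℕ)
    (hσ₁ : 0 < σ₁) (hσ₂ : 0 < σ₂)
    (hα₁ : 0 < α₁) (hα₂ : 0 < α₂)
    (hρ₁ : ρ₁ ∈ Set.Ico (0 : ℝ) 1) (hρ₂ : ρ₂ ∈ Set.Ico (0 : ℝ) 1)
    (h : ∀ w ∈ Set.Ioo (0 : ℝ) 1,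
      unitFrechetCDF σ₁ (α₁ : ℝ) ρ₁ w = unitFrechetCDF σ₂ (α₂ : ℝ) ρ₂ w) :
    σ₁ = σ₂ ∧ α₁ = α₂ ∧ ρ₁ = ρ₂ := by
  have h₀ : ∀ s > 0, unitFrechetCDFOfT ρ₁ ((σ₁⁻¹ * s) ^ α₁) =
      unitFrechetCDFOfT ρ₂ ((σ₂⁻¹ * s) ^ α₂) := fun s hs => by
    have hw : s / (1 + s) ∈ Set.Ioo (0 : ℝ) 1 :=
      ⟨by positivity, (div_lt_one (by positivity)).2 (by linarith)⟩
    simpa only [unitFrechetCDF_div_one_add _ _ _ (by positivity : 1 + s ≠ 0)] using h _ hw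
  have h₁ : ∀ s > 0, unitFrechetCDFOfT ρ₁ ((σ₁ * s) ^ α₁) =
      unitFrechetCDFOfT ρ₂ ((σ₂ * s) ^ α₂) := fun s hs => by
    have hinv := h₀ s⁻¹ (inv_pos.2 hs)
    simp only [← mul_inv, inv_pow] at hinv
    have hsum₁ := unitFrechetCDFOfT_add_inv ρ₁ (pow_pos (mul_pos hσ₁ hs) α₁) (by linarith [hρ₁.2])
    have hsum₂ := unitFrechetCDFOfT_add_inv ρ₂ (pow_pos (mul_pos hσ₂ hs) α₂) (by linarith [hρ₂.2])
    linarith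
  obtain ⟨rfl, hc₀⟩ := eq_and_eq_of_unitFrechetCDFOfT_mul_pow_eq (inv_ne_zero hσ₁.ne')
    (inv_ne_zero hσ₂.ne') hα₁ hα₂ hρ₁.2 hρ₂.2 h₀
  obtain ⟨-, hc₁⟩ := eq_and_eq_of_unitFrechetCDFOfT_mul_pow_eq hσ₁.ne' hσ₂.ne'
    hα₁ hα₂ hρ₁.2 hρ₂.2 h₁
  obtain ⟨rfl, hr⟩ := eq_and_eq_of_inv_pow_mul_eq_of_pow_mul_eq hσ₁ hσ₂
    (sub_pos.2 hρ₁.2) (sub_pos.2 hρ₂.2) hα₁.ne' hc₀ hc₁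
  exact ⟨rfl, rfl, by linarith⟩
end

section
/- If σ = 1, then for every δ with 0 < δ < 1/2, the unit-Fréchet density satisfies f_W(1/2 − δ; 1, α, ρ) = f_W(1/2 + δ; 1, α, ρ); that is, the unit-Fréchet PDF with σ = 1 is symmetric about w = 1/2. -/
/-!
Reflecting `w ↦ 1 - w` inverts the odds `s = w/(1-w)`, hence (for `σ = 1`) also `t = s^α`.
The bracket `g(t)` satisfies `g(1/t) = t² g(t)`, and the prefactor `α s^(α-1) (s+1)²`
picks up exactly the compensating factor `s^(-2α) = t⁻²` under `s ↦ 1/s`.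
-/

/-- The unit-Fréchet PDF: `f_W(w; σ, α, ρ)` for `0 < w < 1`, where
`s = w/(1-w)` and `t = s^α/σ^α`. -/
noncomputable def unitFrechetPDF (σ α ρ w : ℝ) : ℝ :=
  let s : ℝ := w / (1 - w)
  let t : ℝ := s ^ α / σ ^ α
  (α / σ ^ α) * s ^ (α - 1) * (s + 1) ^ 2 *
    ((2 * (t + 1) ^ 2 - ρ * (t ^ 2 + 1)) / ((t + 1) ^ 2 - ρ * t) ^ 2
      - 1 / (t + 1) ^ 2)

section FrechetBracket

variable {K : Type*} [Field K]

def frechetBracket (ρ t : K) : K :=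
  (2 * (t + 1) ^ 2 - ρ * (t ^ 2 + 1)) / ((t + 1) ^ 2 - ρ * t) ^ 2 - 1 / (t + 1) ^ 2

-- Where `(t + 1) ^ 2 = ρ * t` the identity still holds, through `x / 0 = 0` on both sides.
theorem frechetBracket_inv (ρ : K) {t : K} (ht : t ≠ 0) :
    frechetBracket ρ t⁻¹ = t ^ 2 * frechetBracket ρ t := by
  have hnum :
      2 * (t⁻¹ + 1) ^ 2 - ρ * (t⁻¹ ^ 2 + 1) = (2 * (t + 1) ^ 2 - ρ * (t ^ 2 + 1)) / t ^ 2 := by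
    field_simp; ring
  have hden : (t⁻¹ + 1) ^ 2 - ρ * t⁻¹ = ((t + 1) ^ 2 - ρ * t) / t ^ 2 := by
    field_simp; ring
  have hsq : t⁻¹ + 1 = (t + 1) / t := by
    field_simp; ring
  rw [frechetBracket, frechetBracket, hnum, hden, hsq, div_pow, div_pow, div_div_eq_mul_div,
    one_div_div, mul_sub]
  congr 1
  · field_simp
  · rw [mul_one_div]

end FrechetBracket

noncomputable def frechetOddsDensity (α ρ s : ℝ) : ℝ :=
  α * s ^ (α - 1) * (s + 1) ^ 2 * frechetBracket ρ (s ^ α)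

theorem unitFrechetPDF_one (α ρ w : ℝ) :
    unitFrechetPDF 1 α ρ w = frechetOddsDensity α ρ (w / (1 - w)) := by
  simp only [unitFrechetPDF, frechetOddsDensity, frechetBracket, Real.one_rpow, div_one]

theorem frechetOddsDensity_inv (α ρ : ℝ) {s : ℝ} (hs : 0 < s) :
    frechetOddsDensity α ρ s⁻¹ = frechetOddsDensity α ρ s := by
  have ht : s ^ α ≠ 0 := (Real.rpow_pos_of_pos hs α).ne'
  have hpow : s⁻¹ ^ (α - 1) * (s ^ α) ^ 2 = s ^ (α - 1) * s ^ 2 := by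
    rw [Real.inv_rpow hs.le, ← Real.rpow_neg hs.le, ← Real.rpow_natCast, ← Real.rpow_mul hs.le,
      ← Real.rpow_add hs, ← Real.rpow_natCast, ← Real.rpow_add hs]
    ring_nf
  have hsq : (s⁻¹ + 1) ^ 2 * s ^ 2 = (s + 1) ^ 2 := by
    field_simp
    ring
  rw [frechetOddsDensity, frechetOddsDensity, Real.inv_rpow hs.le α, frechetBracket_inv ρ ht,
    ← hsq]
  linear_combination α * (s⁻¹ + 1) ^ 2 * frechetBracket ρ (s ^ α) * hpow

theorem unitFrechetPDF_one_one_sub (α ρ : ℝ) {w : ℝ} (hw₀ : 0 < w) (hw₁ : w < 1) :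
    unitFrechetPDF 1 α ρ (1 - w) = unitFrechetPDF 1 α ρ w := by
  rw [unitFrechetPDF_one, unitFrechetPDF_one, sub_sub_cancel, ← inv_div,
    frechetOddsDensity_inv α ρ (div_pos hw₀ (sub_pos.2 hw₁))]

theorem unitFrechetPDF_symm_general (α ρ : ℝ) :
    ∀ δ : ℝ, 0 < δ → δ < 1 / 2 →
      unitFrechetPDF 1 α ρ (1 / 2 - δ) = unitFrechetPDF 1 α ρ (1 / 2 + δ) := by
  intro δ hδ₀ hδ₁
  have hreflect : 1 - (1 / 2 + δ) = 1 / 2 - δ := by ring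
  rw [← hreflect]
  exact unitFrechetPDF_one_one_sub α ρ (by linarith) (by linarith)

/-- With `σ = 1`, the unit-Fréchet PDF is symmetric about `w = 1/2`. -/
theorem unitFrechetPDF_symm (α ρ : ℝ) (hα : 0 < α) (hρ : ρ ∈ Set.Icc (0 : ℝ) 1) :
    ∀ δ : ℝ, 0 < δ → δ < 1 / 2 →
      unitFrechetPDF 1 α ρ (1 / 2 - δ) = unitFrechetPDF 1 α ρ (1 / 2 + δ) :=
  unitFrechetPDF_symm_general α ρ
end

section
/- For every ρ ∈ [0,1], p ∈ (0,1) and x > 0, the equation G(x; ρ) = p holds if and only if (p−1)x³ + ((3−ρ)p − 2)x² + ((3−ρ)p + ρ − 1)x + p = 0; that is, the quantile Q_Y(p) is the unique positive root of this cubic polynomial. -/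
/-- The CDF `G(x; ρ)`. -/
noncomputable def Gcdf (ρ x : ℝ) : ℝ :=
  (x / (x + 1)) * (((x + 1) ^ 2 - ρ) / ((x + 1) ^ 2 - ρ * x))

lemma sq_add_one_sub_mul_pos {ρ x : ℝ} (hρ : ρ ≤ 2) (hx : 0 ≤ x) : 0 < (x + 1) ^ 2 - ρ * x := by
  nlinarith

lemma Gcdf_eq_div (ρ x : ℝ) :
    Gcdf ρ x = x * ((x + 1) ^ 2 - ρ) / ((x + 1) * ((x + 1) ^ 2 - ρ * x)) :=
  div_mul_div_comm _ _ _ _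

theorem Gcdf_eq_iff_cubic_general (ρ : ℝ) (hρ : ρ ∈ Set.Icc (0 : ℝ) 1)
    (p : ℝ) (x : ℝ) (hx : 0 < x) :
    Gcdf ρ x = p ↔
      (p - 1) * x ^ 3 + ((3 - ρ) * p - 2) * x ^ 2 + ((3 - ρ) * p + ρ - 1) * x + p = 0 := by
  have hden : (x + 1) * ((x + 1) ^ 2 - ρ * x) ≠ 0 :=
    (mul_pos (by linarith) (sq_add_one_sub_mul_pos (by linarith [hρ.2]) hx.le)).ne'
  -- the cubic is `p · denominator − numerator`, expanded
  rw [Gcdf_eq_div, div_eq_iff hden]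
  constructor <;> intro h <;> linear_combination -h

/-- For every `ρ ∈ [0,1]`, `p ∈ (0,1)` and `x > 0`, `G(x; ρ) = p` holds iff
`(p−1)x³ + ((3−ρ)p − 2)x² + ((3−ρ)p + ρ − 1)x + p = 0`. -/
theorem Gcdf_eq_iff_cubic (ρ : ℝ) (hρ : ρ ∈ Set.Icc (0 : ℝ) 1)
    (p : ℝ) (hp : p ∈ Set.Ioo (0 : ℝ) 1) (x : ℝ) (hx : 0 < x) :
    Gcdf ρ x = p ↔
      (p - 1) * x ^ 3 + ((3 - ρ) * p - 2) * x ^ 2 + ((3 - ρ) * p + ρ - 1) * x + p = 0 :=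
  Gcdf_eq_iff_cubic_general ρ hρ p x hx
end

section
/- For every σ > 0, α > 0 and ρ ∈ [0,1], the integral of the unit-Fréchet PDF over the unit interval equals 1: ∫₀¹ f_W(w; σ, α, ρ) dw = 1. -/
open Set MeasureTheory

noncomputable def unitFrechetBracket (ρ t : ℝ) : ℝ :=
  (2 * (t + 1) ^ 2 - ρ * (t ^ 2 + 1)) / ((t + 1) ^ 2 - ρ * t) ^ 2 - 1 / (t + 1) ^ 2

noncomputable def unitFrechetPrimitive (ρ u : ℝ) : ℝ :=
  u - u * (2 - ρ + ρ * u) / (1 - ρ * u * (1 - u))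

-- `1 / (1 + t)` without the division by `1 - w`, so that it is continuous on `[0, 1]`.
noncomputable def unitFrechetU (σ α w : ℝ) : ℝ :=
  (σ * (1 - w)) ^ α / ((σ * (1 - w)) ^ α + w ^ α)

theorem unitFrechetPDF_eq_mul_bracket (σ α ρ w : ℝ) :
    unitFrechetPDF σ α ρ w = α / σ ^ α * (w / (1 - w)) ^ (α - 1) * (w / (1 - w) + 1) ^ 2 *
      unitFrechetBracket ρ ((w / (1 - w)) ^ α / σ ^ α) :=
  rfl

theorem add_one_sq_sub_mul_pos {ρ t : ℝ} (hρ : ρ < 4) (ht : 0 ≤ t) :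
    0 < (t + 1) ^ 2 - ρ * t := by
  rcases ht.eq_or_lt with rfl | ht
  · norm_num
  · nlinarith [sq_nonneg (t - 1)]

theorem unitFrechetBracket_nonneg {ρ t : ℝ} (hρ0 : 0 ≤ ρ) (hρ1 : ρ ≤ 1) (ht : 0 ≤ t) :
    0 ≤ unitFrechetBracket ρ t := by
  have hP : 0 < (t + 1) ^ 2 := by positivity
  have hD : 0 < (t + 1) ^ 2 - ρ * t := add_one_sq_sub_mul_pos (by linarith) ht
  have key : (2 * (t + 1) ^ 2 - ρ * (t ^ 2 + 1)) * (t + 1) ^ 2 - ((t + 1) ^ 2 - ρ * t) ^ 2 =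
      (1 - ρ) * ((t + 1) ^ 2) ^ 2 + ρ * t * (4 * (t + 1) ^ 2 - ρ * t) := by ring
  rw [unitFrechetBracket, sub_nonneg, div_le_div_iff₀ hP (by positivity), one_mul, ← sub_nonneg,
    key]
  have : 0 ≤ 4 * (t + 1) ^ 2 - ρ * t := by nlinarith
  positivity

theorem unitFrechetPDF_nonneg {σ α ρ w : ℝ} (hσ : 0 ≤ σ) (hα : 0 ≤ α) (hρ0 : 0 ≤ ρ) (hρ1 : ρ ≤ 1)
    (hw0 : 0 ≤ w) (hw1 : w ≤ 1) : 0 ≤ unitFrechetPDF σ α ρ w := by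
  have hs : 0 ≤ w / (1 - w) := div_nonneg hw0 (by linarith)
  rw [unitFrechetPDF_eq_mul_bracket]
  have := unitFrechetBracket_nonneg hρ0 hρ1 (by positivity : 0 ≤ (w / (1 - w)) ^ α / σ ^ α)
  positivity

theorem hasDerivAt_div_one_sub {w : ℝ} (hw : w ≠ 1) :
    HasDerivAt (fun x => x / (1 - x)) ((w / (1 - w) + 1) ^ 2) w := by
  have h1w : 1 - w ≠ 0 := sub_ne_zero.2 hw.symm
  refine ((hasDerivAt_id' w).div ((hasDerivAt_id' w).const_sub 1) h1w).congr_deriv ?_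
  field_simp
  ring

theorem hasDerivAt_div_one_sub_rpow_div {σ α w : ℝ} (hw0 : w ≠ 0) (hw1 : w ≠ 1) :
    HasDerivAt (fun x => (x / (1 - x)) ^ α / σ ^ α)
      (α / σ ^ α * (w / (1 - w)) ^ (α - 1) * (w / (1 - w) + 1) ^ 2) w := by
  have hs : w / (1 - w) ≠ 0 := div_ne_zero hw0 (sub_ne_zero.2 hw1.symm)
  refine (((hasDerivAt_div_one_sub hw1).rpow_const (Or.inl hs)).div_const (σ ^ α)).congr_deriv ?_
  ring

theorem one_sub_mul_inv_mul_one_sub_inv {ρ t : ℝ} (ht : t + 1 ≠ 0) :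
    1 - ρ * (t + 1)⁻¹ * (1 - (t + 1)⁻¹) = ((t + 1) ^ 2 - ρ * t) / (t + 1) ^ 2 := by
  field_simp
  ring

theorem hasDerivAt_unitFrechetPrimitive_inv_add_one {ρ t : ℝ} (ht : t + 1 ≠ 0)
    (hD : (t + 1) ^ 2 - ρ * t ≠ 0) :
    HasDerivAt (fun x => unitFrechetPrimitive ρ (x + 1)⁻¹) (unitFrechetBracket ρ t) t := by
  have hu : HasDerivAt (fun x : ℝ => (x + 1)⁻¹) (-1 / (t + 1) ^ 2) t :=
    ((hasDerivAt_id' t).add_const 1).inv ht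
  have hE : 1 - ρ * (t + 1)⁻¹ * (1 - (t + 1)⁻¹) ≠ 0 := by
    rw [one_sub_mul_inv_mul_one_sub_inv ht]
    exact div_ne_zero hD (pow_ne_zero 2 ht)
  refine (hu.sub ((hu.mul ((hu.const_mul ρ).const_add (2 - ρ))).div
    (((hu.const_mul ρ).mul (hu.const_sub 1)).const_sub 1) hE)).congr_deriv ?_
  simp only [Pi.mul_apply]
  rw [one_sub_mul_inv_mul_one_sub_inv ht, unitFrechetBracket]
  field_simp
  ring

theorem one_sub_mul_mul_one_sub_pos {ρ u : ℝ} (hρ : ρ < 4) (hu : u ∈ Icc (0 : ℝ) 1) :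
    0 < 1 - ρ * u * (1 - u) := by
  have hv : 0 ≤ u * (1 - u) := mul_nonneg hu.1 (sub_nonneg.2 hu.2)
  rcases hv.eq_or_lt with hv | hv
  · nlinarith
  · nlinarith [sq_nonneg (2 * u - 1)]

theorem continuousOn_unitFrechetPrimitive {ρ : ℝ} (hρ : ρ < 4) :
    ContinuousOn (unitFrechetPrimitive ρ) (Icc 0 1) :=
  continuousOn_id.sub <| ContinuousOn.div (by fun_prop) (by fun_prop) fun _ hu =>
    (one_sub_mul_mul_one_sub_pos hρ hu).ne'

theorem unitFrechetPrimitive_zero (ρ : ℝ) : unitFrechetPrimitive ρ 0 = 0 := by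
  simp [unitFrechetPrimitive]

theorem unitFrechetPrimitive_one (ρ : ℝ) : unitFrechetPrimitive ρ 1 = -1 := by
  norm_num [unitFrechetPrimitive]

theorem rpow_mul_one_sub_add_rpow_pos {σ α w : ℝ} (hσ : 0 < σ) (hw : w ∈ Icc (0 : ℝ) 1) :
    0 < (σ * (1 - w)) ^ α + w ^ α := by
  rcases hw.2.lt_or_eq with hw1 | rfl
  · have : 0 < σ * (1 - w) := mul_pos hσ (by linarith)
    have := Real.rpow_nonneg hw.1 α
    positivity
  · norm_num
    positivity

theorem continuousOn_unitFrechetU {σ α : ℝ} (hσ : 0 < σ) (hα : 0 ≤ α) :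
    ContinuousOn (unitFrechetU σ α) (Icc 0 1) := by
  have hpow := Real.continuous_rpow_const hα
  have hnum : Continuous fun w : ℝ => (σ * (1 - w)) ^ α := hpow.comp (by fun_prop)
  exact hnum.continuousOn.div (hnum.add hpow).continuousOn fun _ hw =>
    (rpow_mul_one_sub_add_rpow_pos hσ hw).ne'

theorem mapsTo_unitFrechetU {σ α : ℝ} (hσ : 0 < σ) :
    MapsTo (unitFrechetU σ α) (Icc 0 1) (Icc 0 1) := fun w hw => by
  have hpos := rpow_mul_one_sub_add_rpow_pos (α := α) hσ hw
  have ha : 0 ≤ (σ * (1 - w)) ^ α := Real.rpow_nonneg (mul_nonneg hσ.le (by linarith [hw.2])) α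
  have hb : 0 ≤ w ^ α := Real.rpow_nonneg hw.1 α
  exact ⟨div_nonneg ha hpos.le, (div_le_one hpos).2 (by linarith)⟩

theorem unitFrechetU_zero {σ α : ℝ} (hσ : 0 < σ) (hα : α ≠ 0) : unitFrechetU σ α 0 = 1 := by
  simp [unitFrechetU, Real.zero_rpow hα, (Real.rpow_pos_of_pos hσ α).ne']

theorem unitFrechetU_one {σ α : ℝ} (hα : α ≠ 0) : unitFrechetU σ α 1 = 0 := by
  simp [unitFrechetU, Real.zero_rpow hα]

theorem unitFrechetU_eq_inv {σ α w : ℝ} (hσ : 0 < σ) (hw0 : 0 ≤ w) (hw1 : w < 1) :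
    unitFrechetU σ α w = ((w / (1 - w)) ^ α / σ ^ α + 1)⁻¹ := by
  have h1w : 0 < 1 - w := by linarith
  have ha : 0 < (σ * (1 - w)) ^ α := Real.rpow_pos_of_pos (mul_pos hσ h1w) α
  have hb : 0 ≤ w ^ α := Real.rpow_nonneg hw0 α
  rw [unitFrechetU, Real.div_rpow hw0 h1w.le, div_div, ← Real.mul_rpow h1w.le hσ.le,
    mul_comm (1 - w)]
  field_simp
  ring

theorem hasDerivAt_unitFrechetPrimitive_comp_unitFrechetU {σ α ρ w : ℝ} (hσ : 0 < σ)
    (hρ : ρ < 4) (hw : w ∈ Ioo (0 : ℝ) 1) :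
    HasDerivAt (fun x => unitFrechetPrimitive ρ (unitFrechetU σ α x))
      (unitFrechetPDF σ α ρ w) w := by
  obtain ⟨hw0, hw1⟩ := hw
  have ht : 0 ≤ (w / (1 - w)) ^ α / σ ^ α := by
    have := div_nonneg hw0.le (sub_nonneg.2 hw1.le)
    positivity
  have hK := hasDerivAt_unitFrechetPrimitive_inv_add_one (by positivity)
    (add_one_sq_sub_mul_pos hρ ht).ne'
  rw [unitFrechetPDF_eq_mul_bracket, mul_comm]
  refine (hK.comp w (hasDerivAt_div_one_sub_rpow_div hw0.ne' hw1.ne)).congr_of_eventuallyEq ?_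
  filter_upwards [Ioo_mem_nhds hw0 hw1] with x hx
  rw [Function.comp_apply, unitFrechetU_eq_inv hσ hx.1.le hx.2]

/-- The unit-Fréchet PDF integrates to 1 over the unit interval. -/
theorem unitFrechetPDF_integral_eq_one (σ α ρ : ℝ) (hσ : 0 < σ) (hα : 0 < α)
    (hρ : ρ ∈ Set.Icc (0 : ℝ) 1) :
    ∫ w in (0:ℝ)..1, unitFrechetPDF σ α ρ w = 1 := by
  obtain ⟨hρ0, hρ1⟩ := hρ
  have hρ4 : ρ < 4 := by linarith
  have hcont : ContinuousOn (fun w => unitFrechetPrimitive ρ (unitFrechetU σ α w)) (Icc 0 1) :=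
    (continuousOn_unitFrechetPrimitive hρ4).comp (continuousOn_unitFrechetU hσ hα.le)
      (mapsTo_unitFrechetU hσ)
  have hderiv : ∀ w ∈ Ioo (0 : ℝ) 1, HasDerivAt
      (fun w => unitFrechetPrimitive ρ (unitFrechetU σ α w)) (unitFrechetPDF σ α ρ w) w :=
    fun _ hw => hasDerivAt_unitFrechetPrimitive_comp_unitFrechetU hσ hρ4 hw
  have hint : IntervalIntegrable (unitFrechetPDF σ α ρ) volume 0 1 :=
    (intervalIntegrable_iff_integrableOn_Ioc_of_le zero_le_one).2 <|
      intervalIntegral.integrableOn_deriv_of_nonneg hcont hderiv fun _ hw =>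
        unitFrechetPDF_nonneg hσ.le hα.le hρ0 hρ1 hw.1.le hw.2.le
  rw [intervalIntegral.integral_eq_sub_of_hasDerivAt_of_le zero_le_one hcont hderiv hint,
    unitFrechetU_one hα.ne', unitFrechetU_zero hσ hα.ne', unitFrechetPrimitive_zero,
    unitFrechetPrimitive_one, sub_neg_eq_add, zero_add]
end

section
/- For every σ₁, σ₂ > 0, α > 0, ρ ∈ [0,1] and every s > 0, the following integral identity holds: ∫₀^∞ exp{ −(s x/σ₁)^{−α} − (x/σ₂)^{−α} + ρ[(s x/σ₁)^α + (x/σ₂)^α]^{−1} } · (α/x) · [ (x/σ₂)^{−α} − ρ (x/σ₂)^α ( (s x/σ₁)^α + (x/σ₂)^α )^{−2} ] dx = [ 1 − ρ( (σ₂ s/σ₁)^α + 1 )^{−2} ] / [ 1 + ( σ₂ s/σ₁ )^{−α} − ρ( (σ₂ s/σ₁)^α + 1 )^{−1} ]. -/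
/-!
With `k = (σ₂ s / σ₁) ^ α` and `t = (x / σ₂) ^ α` we have `(s x / σ₁) ^ α = k t`, so the
exponent collapses to `-A t⁻¹` and the bracket to `B t⁻¹`, where `A = 1 + k⁻¹ - ρ / (k + 1)` and
`B = 1 - ρ / (k + 1) ^ 2`. The integrand is therefore `B` times an unnormalised Fréchet density,
whose total mass `A⁻¹` is computed by the substitution `y = x ^ (-α)`; `ρ ≤ 1` makes `A` positive.
-/

open MeasureTheory Set Real

theorem integral_exp_neg_mul_Ioi_zero {a : ℝ} (ha : 0 < a) :
    ∫ y in Ioi (0 : ℝ), exp (-a * y) = a⁻¹ := by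
  rw [integral_exp_mul_Ioi (neg_lt_zero.mpr ha), mul_zero, exp_zero, neg_div_neg_eq, one_div]

theorem integral_exp_neg_mul_div_rpow_neg {α c a : ℝ} (hα : 0 < α) (hc : 0 < c) (ha : 0 < a) :
    ∫ x in Ioi (0 : ℝ), exp (-a * (x / c) ^ (-α)) * (α / x) * (x / c) ^ (-α) = a⁻¹ := by
  have hcα : 0 < c ^ α := rpow_pos_of_pos hc α
  have hsubst : ∀ x ∈ Ioi (0 : ℝ), exp (-a * (x / c) ^ (-α)) * (α / x) * (x / c) ^ (-α) =
      (|-α| * x ^ (-α - 1)) • (c ^ α * exp (-(a * c ^ α) * x ^ (-α))) := by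
    intro x (hx : 0 < x)
    have hscale : (x / c) ^ (-α) = c ^ α * x ^ (-α) := by
      rw [div_rpow hx.le hc.le, rpow_neg hc.le, div_inv_eq_mul, mul_comm]
    rw [hscale, rpow_sub_one hx.ne', abs_neg, abs_of_pos hα, smul_eq_mul]
    ring_nf
  rw [setIntegral_congr_fun measurableSet_Ioi hsubst,
    integral_comp_rpow_Ioi (fun y ↦ c ^ α * exp (-(a * c ^ α) * y)) (neg_ne_zero.mpr hα.ne'),
    integral_const_mul, integral_exp_neg_mul_Ioi_zero (by positivity)]
  field_simp

theorem neg_rpow_neg_sub_rpow_neg_add_mul_inv {m y : ℝ} (hm : 0 < m) (hy : 0 < y) (α ρ : ℝ) :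
    -(m * y) ^ (-α) - y ^ (-α) + ρ * ((m * y) ^ α + y ^ α)⁻¹ =
      -(1 + (m ^ α)⁻¹ - ρ / (m ^ α + 1)) * y ^ (-α) := by
  have : 0 < m ^ α := rpow_pos_of_pos hm α
  have : 0 < y ^ α := rpow_pos_of_pos hy α
  rw [mul_rpow hm.le hy.le, mul_rpow hm.le hy.le, rpow_neg hm.le, rpow_neg hy.le]
  field_simp
  ring

theorem rpow_neg_sub_mul_div_sq {m y : ℝ} (hm : 0 < m) (hy : 0 < y) (α ρ : ℝ) :
    y ^ (-α) - ρ * y ^ α / ((m * y) ^ α + y ^ α) ^ 2 =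
      (1 - ρ / (m ^ α + 1) ^ 2) * y ^ (-α) := by
  have : 0 < m ^ α := rpow_pos_of_pos hm α
  have : 0 < y ^ α := rpow_pos_of_pos hy α
  rw [mul_rpow hm.le hy.le, rpow_neg hy.le]
  field_simp

theorem one_add_inv_sub_div_add_one_pos {k ρ : ℝ} (hk : 0 < k) (hρ : ρ ≤ 1) :
    0 < 1 + k⁻¹ - ρ / (k + 1) := by
  have : ρ / (k + 1) < 1 := (div_lt_one (by linarith)).mpr (by linarith)
  have : 0 < k⁻¹ := inv_pos.mpr hk
  linarith

/-- The integral identity yielding the CDF of the ratio `X₁/(X₁+X₂)` for a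
bivariate extreme distribution with Fréchet margins. -/
theorem bivExtreme_ratio_integral (σ₁ σ₂ α ρ : ℝ) (hσ₁ : 0 < σ₁) (hσ₂ : 0 < σ₂)
    (hα : 0 < α) (hρ : ρ ∈ Set.Icc (0 : ℝ) 1) (s : ℝ) (hs : 0 < s) :
    ∫ x in Set.Ioi (0 : ℝ),
      Real.exp (-(s * x / σ₁) ^ (-α) - (x / σ₂) ^ (-α)
          + ρ * ((s * x / σ₁) ^ α + (x / σ₂) ^ α)⁻¹)
        * (α / x)
        * ((x / σ₂) ^ (-α)
            - ρ * (x / σ₂) ^ α / ((s * x / σ₁) ^ α + (x / σ₂) ^ α) ^ 2) =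
      (1 - ρ / ((σ₂ * s / σ₁) ^ α + 1) ^ 2)
        / (1 + (σ₂ * s / σ₁) ^ (-α) - ρ / ((σ₂ * s / σ₁) ^ α + 1)) := by
  set m := σ₂ * s / σ₁
  have hm : 0 < m := by positivity
  have hA := one_add_inv_sub_div_add_one_pos (rpow_pos_of_pos hm α) hρ.2
  rw [rpow_neg hm.le, div_eq_mul_inv, ← integral_exp_neg_mul_div_rpow_neg hα hσ₂ hA,
    ← integral_const_mul]
  refine setIntegral_congr_fun measurableSet_Ioi fun x (hx : 0 < x) ↦ ?_
  have hsx : s * x / σ₁ = m * (x / σ₂) := by simp only [m]; field_simp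
  rw [hsx, neg_rpow_neg_sub_rpow_neg_add_mul_inv hm (by positivity),
    rpow_neg_sub_mul_div_sq hm (by positivity)]
  ring
end
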